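/- arXiv:1806.05988 — 5 statements merged into one kernel-verified Lean document; each statement's English description precedes it below -/
import Mathlib

section
/- The Apéry numbers q_n = ∑_{k=0}^n C(n+k,k)² C(n,k)² satisfy the recurrence (n+2)³ q_{n+2} − (2n+3)(17n²+51n+39) q_{n+1} + (n+1)³ q_n = 0 for all n ≥ 0. -/
/-!
Creative telescoping. Zeilberger's algorithm applied to the summand `t n k = C(n+k,k)² C(n,k)²`
produces a rational certificate `R n k` (`aperyCert`) with
`(n+2)³ t (n+2) k - (2n+3)(17n²+51n+39) t (n+1) k + (n+1)³ t n k = R n (k+1) - R n k`.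
Every binomial coefficient occurring there is a rational multiple of `C(n+k,k)` or `C(n+2,k)`,
so this is an identity of rational functions. Summing over `k < n + 3` telescopes to
`R n (n+3) - R n 0 = 0`.
-/

/-- The Apéry numbers. -/
def aperyQ (n : ℕ) : ℤ :=
  ∑ k ∈ Finset.range (n + 1), ((n + k).choose k : ℤ) ^ 2 * (n.choose k : ℤ) ^ 2

open Finset

section CastChoose

variable {K : Type*} [Field K] [CharZero K]

theorem cast_choose_eq_mul_cast_choose_succ_left (m k : ℕ) :
    (m.choose k : K) = (m + 1 - k) / (m + 1) * ((m + 1).choose k : K) := by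
  rw [div_mul_eq_mul_div, eq_div_iff m.cast_add_one_ne_zero]
  rcases le_or_gt k (m + 1) with h | h
  · have h' := Nat.choose_mul_succ_eq m k
    rw [← Nat.cast_inj (R := K)] at h'
    push_cast [h] at h'
    rw [h', mul_comm]
  · simp [Nat.choose_eq_zero_of_lt h, Nat.choose_eq_zero_of_lt (h.trans' m.lt_succ_self)]

theorem cast_choose_succ_right_eq_mul (m k : ℕ) :
    (m.choose (k + 1) : K) = (m - k) / (k + 1) * (m.choose k : K) := by
  rw [div_mul_eq_mul_div, eq_div_iff k.cast_add_one_ne_zero]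
  rcases le_or_gt k m with h | h
  · have h' := Nat.choose_succ_right_eq m k
    rw [← Nat.cast_inj (R := K)] at h'
    push_cast [h] at h'
    rw [h', mul_comm]
  · simp [Nat.choose_eq_zero_of_lt h, Nat.choose_eq_zero_of_lt (h.trans k.lt_succ_self)]

theorem cast_choose_add_succ_left_eq_mul (m k : ℕ) :
    ((m + k + 1).choose k : K) = (m + k + 1) / (m + 1) * ((m + k).choose k : K) := by
  rw [div_mul_eq_mul_div, eq_div_iff m.cast_add_one_ne_zero]
  have h := Nat.add_one_mul_choose_eq (m + k) m
  rw [Nat.choose_symm_add, show m + k + 1 = m + 1 + k by ring, Nat.choose_symm_add] at h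
  rw [← Nat.cast_inj (R := K)] at h
  push_cast at h
  rw [show m + k + 1 = m + 1 + k by ring]
  linear_combination -h

end CastChoose

def aperyTerm (n k : ℕ) : ℚ :=
  ((n + k).choose k : ℚ) ^ 2 * (n.choose k : ℚ) ^ 2

theorem cast_aperyQ_eq_sum_range {n m : ℕ} (h : n < m) :
    (aperyQ n : ℚ) = ∑ k ∈ range m, aperyTerm n k := by
  rw [aperyQ]
  push_cast
  refine sum_subset (range_subset_range.2 h) fun k _ hk => ?_
  simp [Nat.choose_eq_zero_of_lt (not_lt.1 (mem_range.not.1 hk))]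

def aperyCert (n k : ℕ) : ℚ :=
  4 * (2 * n + 3) * (2 * k ^ 2 - 3 * k - 4 * (n + 1) * (n + 2)) * k ^ 4
    * ((n + k).choose k : ℚ) ^ 2 * ((n + 2).choose k : ℚ) ^ 2 / ((n + 1) ^ 2 * (n + 2) ^ 2)

theorem aperyCert_zero (n : ℕ) : aperyCert n 0 = 0 := by
  simp [aperyCert]

theorem aperyCert_of_lt {n k : ℕ} (h : n + 2 < k) : aperyCert n k = 0 := by
  simp [aperyCert, Nat.choose_eq_zero_of_lt h]

theorem aperyTerm_recurrence_eq_aperyCert_sub (n k : ℕ) :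
    (n + 2) ^ 3 * aperyTerm (n + 2) k
      - (2 * n + 3) * (17 * n ^ 2 + 51 * n + 39) * aperyTerm (n + 1) k
      + (n + 1) ^ 3 * aperyTerm n k
      = aperyCert n (k + 1) - aperyCert n k := by
  have hn₁ := cast_choose_add_succ_left_eq_mul (K := ℚ) n k
  have hn₂ := cast_choose_add_succ_left_eq_mul (K := ℚ) (n + 1) k
  have hn₁' := cast_choose_eq_mul_cast_choose_succ_left (K := ℚ) n k
  have hn₂' := cast_choose_eq_mul_cast_choose_succ_left (K := ℚ) (n + 1) k
  have hk₁ := cast_choose_succ_right_eq_mul (K := ℚ) (n + 2) k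
  have hk₂ := cast_choose_succ_right_eq_mul (K := ℚ) (n + k + 1) k
  simp only [aperyTerm, aperyCert, show n + 2 + k = n + 1 + k + 1 by ring,
    show n + 1 + k = n + k + 1 by ring, show n + (k + 1) = n + k + 1 by ring] at *
  rw [hn₂, hk₂, hn₁, hn₁', hn₂', hk₁]
  push_cast
  field_simp
  ring

theorem apery_recurrence (n : ℕ) :
    ((n : ℤ) + 2) ^ 3 * aperyQ (n + 2)
      - (2 * (n : ℤ) + 3) * (17 * (n : ℤ) ^ 2 + 51 * n + 39) * aperyQ (n + 1)
      + ((n : ℤ) + 1) ^ 3 * aperyQ n = 0 := by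
  suffices h : ((n : ℚ) + 2) ^ 3 * aperyQ (n + 2)
      - (2 * (n : ℚ) + 3) * (17 * (n : ℚ) ^ 2 + 51 * n + 39) * aperyQ (n + 1)
      + ((n : ℚ) + 1) ^ 3 * aperyQ n = 0 by exact_mod_cast h
  rw [cast_aperyQ_eq_sum_range (m := n + 3) (by omega),
    cast_aperyQ_eq_sum_range (m := n + 3) (by omega),
    cast_aperyQ_eq_sum_range (m := n + 3) (by omega), mul_sum, mul_sum, mul_sum, ← sum_sub_distrib,
    ← sum_add_distrib]
  simp only [aperyTerm_recurrence_eq_aperyCert_sub]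
  rw [sum_range_sub, aperyCert_of_lt (by omega), aperyCert_zero, sub_zero]
end

section
/- If sequences (p_n) and (q_n) both satisfy the recurrence (n+2)³ y_{n+2} − (2n+3)(17n²+51n+39) y_{n+1} + (n+1)³ y_n = 0 with p_0 = 0, p_1 = 6, q_0 = 1, q_1 = 5, then for all n ≥ 1, p_n q_{n−1} − p_{n−1} q_n = 6/n³. -/
/-!
Cross-multiplying the recurrences for `p` and `q` cancels the middle coefficient and leaves
`(n+2)³ W(n+1) = (n+1)³ W(n)` for the Casoratian `W(n) = p(n+1) q(n) - p(n) q(n+1)`, so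
`(n+1)³ W(n)` is constant, equal to `W(0) = 6`.
-/

def casoratian {R : Type*} [CommRing R] (y z : ℕ → R) (n : ℕ) : R :=
  y (n + 1) * z n - y n * z (n + 1)

section ThreeTermRecurrence

variable {R : Type*} [CommRing R] {a b c y z : ℕ → R}

theorem casoratian_succ
    (hy : ∀ n, a n * y (n + 2) - b n * y (n + 1) + c n * y n = 0)
    (hz : ∀ n, a n * z (n + 2) - b n * z (n + 1) + c n * z n = 0) (n : ℕ) :
    a n * casoratian y z (n + 1) = c n * casoratian y z n := by
  unfold casoratian
  linear_combination z (n + 1) * hy n - y (n + 1) * hz n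

theorem mul_casoratian_eq_mul_casoratian_zero (hac : ∀ n, a n = c (n + 1))
    (hy : ∀ n, a n * y (n + 2) - b n * y (n + 1) + c n * y n = 0)
    (hz : ∀ n, a n * z (n + 2) - b n * z (n + 1) + c n * z n = 0) (n : ℕ) :
    c n * casoratian y z n = c 0 * casoratian y z 0 := by
  induction n with
  | zero => rfl
  | succ m ih => rw [← hac, casoratian_succ hy hz, ih]

end ThreeTermRecurrence

theorem apery_determinant (p q : ℕ → ℚ)
    (hp : ∀ n : ℕ, ((n : ℚ) + 2) ^ 3 * p (n + 2)
        - (2 * (n : ℚ) + 3) * (17 * (n : ℚ) ^ 2 + 51 * n + 39) * p (n + 1)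
        + ((n : ℚ) + 1) ^ 3 * p n = 0)
    (hq : ∀ n : ℕ, ((n : ℚ) + 2) ^ 3 * q (n + 2)
        - (2 * (n : ℚ) + 3) * (17 * (n : ℚ) ^ 2 + 51 * n + 39) * q (n + 1)
        + ((n : ℚ) + 1) ^ 3 * q n = 0)
    (hp0 : p 0 = 0) (hp1 : p 1 = 6) (hq0 : q 0 = 1) (hq1 : q 1 = 5) :
    ∀ n : ℕ, 1 ≤ n → p n * q (n - 1) - p (n - 1) * q n = 6 / (n : ℚ) ^ 3 := by
  intro n hn
  obtain ⟨m, rfl⟩ := Nat.exists_eq_add_of_le' hn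
  have hW := mul_casoratian_eq_mul_casoratian_zero (c := fun n : ℕ => ((n : ℚ) + 1) ^ 3)
    (fun n => by push_cast; ring) hp hq m
  simp only [casoratian, hp0, hp1, hq0, hq1] at hW
  rw [Nat.add_sub_cancel, eq_div_iff (by positivity)]
  push_cast at hW ⊢
  linear_combination hW
end

section
/- ζ(3) = (5/2) ∑_{n≥1} (−1)^{n−1} / (n³ C(2n,n)). -/
/-!
Sum the absolutely convergent double array
`a(n, k) = (-1)^(k-1) (k-1)!² (n-k-1)! / (n+k)!`, `1 ≤ k < n`, in two ways.
Each row telescopes to `1/n³ - 2 (-1)^(n-1) / (n³ C(2n,n))`, and each column is a multiple of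
`∑_d d!/(d+c+1)!`, which telescopes to `1/(c·c!)`; this gives `(-1)^(k-1) / (2 k³ C(2k,k))`.
Writing `S` for the alternating series, the two orders of summation give `ζ(3) - 2S = S/2`.
-/

open Finset Filter Topology Nat

theorem Antitone.hasSum_sub_succ {f : ℕ → ℝ} {l : ℝ} (hf : Antitone f)
    (h : Tendsto f atTop (𝓝 l)) : HasSum (fun n => f n - f (n + 1)) (f 0 - l) := by
  rw [hasSum_iff_tendsto_nat_of_nonneg (fun n => sub_nonneg.2 (hf n.le_succ))]
  simpa only [sum_range_sub'] using tendsto_const_nhds.sub h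

theorem hasSum_factorial_div_factorial_add (c : ℕ) :
    HasSum (fun d : ℕ => (d ! : ℝ) / (d + c + 2)!) (1 / ((c + 1) * (c + 1)!)) := by
  set f : ℕ → ℝ := fun d => (d ! : ℝ) / (d + c + 1)!
  have hdiff (d : ℕ) : f d - f (d + 1) = (c + 1) * ((d ! : ℝ) / (d + c + 2)!) := by
    simp only [f, show d + 1 + c + 1 = d + c + 2 by omega, factorial_succ (d + c + 1),
      factorial_succ d]
    push_cast
    field_simp
    ring
  have hanti : Antitone f := antitone_nat_of_succ_le fun d => by
    have := hdiff d
    have : (0 : ℝ) ≤ (c + 1) * ((d ! : ℝ) / (d + c + 2)!) := by positivity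
    linarith
  have hle (d : ℕ) : f d ≤ 1 / (d + 1) := by
    have hfac : ((d + 1)! : ℝ) ≤ (d + c + 1)! := by
      exact_mod_cast factorial_le (by omega)
    rw [div_le_div_iff₀ (by positivity) (by positivity), one_mul]
    calc (d ! : ℝ) * (d + 1) = (d + 1)! := by push_cast [factorial_succ]; ring
      _ ≤ (d + c + 1)! := hfac
  have hlim : Tendsto f atTop (𝓝 0) :=
    squeeze_zero (fun d => by positivity) hle tendsto_one_div_add_atTop_nhds_zero_nat
  have hvalue : (f 0 - 0) / (c + 1) = 1 / ((c + 1) * (c + 1)!) := by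
    simp only [f, factorial_zero, zero_add, cast_one, sub_zero]
    field_simp
  rw [← hvalue]
  exact ((hanti.hasSum_sub_succ hlim).div_const (c + 1)).congr_fun fun d => by
    rw [hdiff]
    field_simp

theorem summable_one_div_nat_add_one_pow {p : ℕ} (hp : 1 < p) :
    Summable fun n : ℕ => 1 / ((n : ℝ) + 1) ^ p := by
  simpa only [cast_add, cast_one] using
    (summable_nat_add_iff 1).2 (Real.summable_one_div_nat_pow.2 hp)

namespace Zeta3Markov

noncomputable def markovTerm (n : ℕ) : ℝ :=
  (-1 : ℝ) ^ n / (((n : ℝ) + 1) ^ 3 * ((2 * (n + 1)).choose (n + 1) : ℝ))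

theorem markovTerm_eq_factorial (n : ℕ) :
    markovTerm n = (-1) ^ n * (n ! : ℝ) ^ 2 / ((n + 1) * (2 * n + 2)!) := by
  have hchoose : ((2 * (n + 1)).choose (n + 1) : ℝ) = (2 * n + 2)! / ((n + 1)! * (n + 1)!) := by
    rw [cast_choose ℝ (by omega), show 2 * (n + 1) - (n + 1) = n + 1 by omega,
      show 2 * (n + 1) = 2 * n + 2 by omega]
  rw [markovTerm, hchoose, factorial_succ n]
  push_cast
  field_simp

theorem abs_markovTerm_le (n : ℕ) : |markovTerm n| ≤ 1 / ((n : ℝ) + 1) ^ 3 := by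
  have hchoose : (1 : ℝ) ≤ (2 * (n + 1)).choose (n + 1) := by
    exact_mod_cast one_le_iff_ne_zero.2 (choose_pos (by omega)).ne'
  rw [markovTerm, abs_div, abs_neg_one_pow, abs_of_pos (by positivity)]
  exact div_le_div_of_nonneg_left zero_le_one (by positivity)
    (le_mul_of_one_le_right (by positivity) hchoose)

theorem summable_markovTerm : Summable markovTerm :=
  .of_norm_bounded (summable_one_div_nat_add_one_pow (by norm_num)) abs_markovTerm_le

/-- With `n = m + 1` and `k = j + 1` this is the array `a(n, k)` of the proof. -/
noncomputable def doubleTerm (m j : ℕ) : ℝ :=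
  if j < m then (-1) ^ j * (j ! : ℝ) ^ 2 * (m - 1 - j)! / (m + j + 2)! else 0

theorem doubleTerm_of_le {m j : ℕ} (h : m ≤ j) : doubleTerm m j = 0 :=
  if_neg h.not_gt

theorem abs_doubleTerm (m j : ℕ) : |doubleTerm m j| = (-1) ^ j * doubleTerm m j := by
  unfold doubleTerm
  split_ifs
  · rw [mul_div_assoc, mul_assoc, abs_mul, abs_neg_one_pow, one_mul, ← mul_assoc,
      ← pow_add, Even.neg_one_pow ⟨j, rfl⟩, one_mul, abs_of_nonneg (by positivity)]
  · simp

/-- `doubleTerm m j = rowPotential m (j + 1) - rowPotential m j`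
because `(j + 1)² + (m - j)(m + j + 2) = (m + 1)²`. -/
noncomputable def rowPotential (m k : ℕ) : ℝ :=
  (-1) ^ (k + 1) * (k ! : ℝ) ^ 2 * (m - k)! / ((m + 1) ^ 2 * (m + k + 1)!)

theorem doubleTerm_eq_rowPotential_sub {m j : ℕ} (h : j < m) :
    doubleTerm m j = rowPotential m (j + 1) - rowPotential m j := by
  obtain ⟨d, rfl⟩ : ∃ d, m = j + 1 + d := ⟨m - (j + 1), by omega⟩
  rw [doubleTerm, if_pos h, rowPotential, rowPotential,
    show j + 1 + d - 1 - j = d by omega, show j + 1 + d - (j + 1) = d by omega,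
    show j + 1 + d - j = d + 1 by omega, show j + 1 + d + j + 2 = 2 * j + d + 3 by omega,
    show j + 1 + d + (j + 1) + 1 = 2 * j + d + 3 by omega,
    show j + 1 + d + j + 1 = 2 * j + d + 2 by omega,
    factorial_succ (2 * j + d + 2), factorial_succ d, factorial_succ j]
  push_cast
  field_simp
  ring

theorem rowPotential_zero (m : ℕ) : rowPotential m 0 = -(1 / ((m : ℝ) + 1) ^ 3) := by
  rw [rowPotential, Nat.sub_zero, factorial_succ m]
  push_cast
  field_simp
  ring

theorem rowPotential_self (m : ℕ) : rowPotential m m = -2 * markovTerm m := by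
  rw [rowPotential, markovTerm_eq_factorial, Nat.sub_self, show m + m + 1 = 2 * m + 1 by omega,
    show 2 * m + 2 = 2 * m + 1 + 1 by omega, factorial_succ (2 * m + 1)]
  push_cast
  field_simp
  ring

theorem tsum_doubleTerm_row (m : ℕ) :
    ∑' j, doubleTerm m j = 1 / ((m : ℝ) + 1) ^ 3 - 2 * markovTerm m := by
  rw [tsum_eq_sum (s := range m) fun j hj => doubleTerm_of_le (by simpa using hj),
    sum_congr rfl fun j hj => doubleTerm_eq_rowPotential_sub (mem_range.1 hj),
    sum_range_sub, rowPotential_self, rowPotential_zero]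
  ring

theorem doubleTerm_add_succ (d j : ℕ) :
    doubleTerm (d + (j + 1)) j =
      (-1) ^ j * (j ! : ℝ) ^ 2 * ((d ! : ℝ) / (d + (2 * j + 1) + 2)!) := by
  rw [doubleTerm, if_pos (by omega), show d + (j + 1) - 1 - j = d by omega,
    show d + (j + 1) + j + 2 = d + (2 * j + 1) + 2 by omega, mul_div_assoc]

theorem hasSum_doubleTerm_column (j : ℕ) :
    HasSum (fun m => doubleTerm m j) (markovTerm j / 2) := by
  have hvalue : (-1) ^ j * (j ! : ℝ) ^ 2 * (1 / ((↑(2 * j + 1) + 1) * (2 * j + 1 + 1)!)) =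
      markovTerm j / 2 := by
    rw [markovTerm_eq_factorial, show 2 * j + 1 + 1 = 2 * j + 2 by omega]
    push_cast
    field_simp
    ring
  have hshift : HasSum (fun d => doubleTerm (d + (j + 1)) j) (markovTerm j / 2) := by
    rw [← hvalue]
    exact ((hasSum_factorial_div_factorial_add (2 * j + 1)).mul_left _).congr_fun
      (doubleTerm_add_succ · j)
  rw [← hasSum_nat_add_iff' (j + 1)]
  rwa [sum_eq_zero fun m hm => doubleTerm_of_le (by simp at hm; omega), sub_zero]

theorem summable_uncurry_doubleTerm : Summable (Function.uncurry doubleTerm) := by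
  have habs_column (j : ℕ) :
      HasSum (fun m => |doubleTerm m j|) ((-1) ^ j * (markovTerm j / 2)) := by
    simpa only [abs_doubleTerm] using (hasSum_doubleTerm_column j).mul_left ((-1) ^ j)
  have habs : Summable fun p : ℕ × ℕ => |doubleTerm p.2 p.1| := by
    rw [summable_prod_of_nonneg fun p => abs_nonneg _]
    refine ⟨fun j => (habs_column j).summable, ?_⟩
    simp only [(habs_column _).tsum_eq]
    refine .of_norm_bounded (summable_markovTerm.abs.div_const 2) fun j => ?_
    simp
  exact (summable_abs_iff.1 habs).prod_symm

end Zeta3Markov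

open Zeta3Markov

theorem zeta3_markov_series :
    (∑' k : ℕ, (1 : ℝ) / ((k : ℝ) + 1) ^ 3) =
      (5 / 2) * ∑' n : ℕ, (-1 : ℝ) ^ n /
        (((n : ℝ) + 1) ^ 3 * ((2 * (n + 1)).choose (n + 1) : ℝ)) := by
  have hswap := summable_uncurry_doubleTerm.tsum_comm
  have hcolumns : ∑' j, ∑' m, doubleTerm m j = (∑' n, markovTerm n) / 2 := by
    simp only [(hasSum_doubleTerm_column _).tsum_eq, tsum_div_const]
  have hrows : ∑' m, ∑' j, doubleTerm m j =
      (∑' k : ℕ, 1 / ((k : ℝ) + 1) ^ 3) - 2 * ∑' n, markovTerm n := by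
    simp only [tsum_doubleTerm_row]
    rw [(summable_one_div_nat_add_one_pow (by norm_num)).tsum_sub (summable_markovTerm.mul_left 2),
      tsum_mul_left]
  change _ = 5 / 2 * ∑' n, markovTerm n
  linarith
end

section
/- ζ(3) = (1/4) ∑_{k≥1} (−1)^{k−1} (56k² − 32k + 5) / (k³ (2k−1)² C(2k,k) C(3k,k)). -/
/-!
Markov–WZ method: the pair `F`, `G` satisfies `F 0 i = 1/(i+1)³` and
`F n (i+2) - F (n+1) i = G n i - G n (i+1)`. Summing over `i`, the row sum of `F` drops from row
`n` to row `n+1` by `F n 0 + F n 1 + G n 0`, a quarter of the `n`-th term of Amdeberhan's series.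
Since `4^n n!² (n+i)! ≤ (3n+1+i)!`, the row sums decay like `4^{-n}`, and summing the drops over
all rows recovers `ζ(3)`, the sum of row `0`.
-/

open Filter Topology Finset Nat

section Telescoping

variable {M : Type*} [AddCommGroup M] [TopologicalSpace M] [IsTopologicalAddGroup M] [T2Space M]

theorem hasSum_sub_succ_of_tendsto_zero {f : ℕ → M} (hs : Summable fun n ↦ f n - f (n + 1))
    (hf : Tendsto f atTop (𝓝 0)) : HasSum (fun n ↦ f n - f (n + 1)) (f 0) := by
  rw [hs.hasSum_iff_tendsto_nat]
  simp_rw [sum_range_sub']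
  simpa using tendsto_const_nhds.sub hf

theorem tsum_sub_tsum_succ_of_wz {F G : ℕ → ℕ → M} (k : ℕ) (hF : ∀ n, Summable (F n))
    (hwz : ∀ n i, F n (i + k) - F (n + 1) i = G n i - G n (i + 1))
    (hG : ∀ n, Tendsto (G n) atTop (𝓝 0)) (n : ℕ) :
    ∑' i, F n i - ∑' i, F (n + 1) i = ∑ i ∈ range k, F n i + G n 0 := by
  have hshift : Summable fun i ↦ F n (i + k) := (summable_nat_add_iff k).mpr (hF n)
  have hG_sum : HasSum (fun i ↦ G n i - G n (i + 1)) (G n 0) := by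
    refine hasSum_sub_succ_of_tendsto_zero ?_ (hG n)
    simpa only [← hwz] using hshift.sub (hF (n + 1))
  have hdiff : ∑' i, F n (i + k) - ∑' i, F (n + 1) i = G n 0 := by
    rw [← hshift.tsum_sub (hF (n + 1))]
    simpa only [hwz] using hG_sum.tsum_eq
  rw [← (hF n).sum_add_tsum_nat_add k, add_sub_assoc, hdiff]

theorem hasSum_tsum_row_zero_of_wz {F G : ℕ → ℕ → M} (k : ℕ) (hF : ∀ n, Summable (F n))
    (hwz : ∀ n i, F n (i + k) - F (n + 1) i = G n i - G n (i + 1))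
    (hG : ∀ n, Tendsto (G n) atTop (𝓝 0)) (hrow : Tendsto (fun n ↦ ∑' i, F n i) atTop (𝓝 0))
    (hs : Summable fun n ↦ ∑ i ∈ range k, F n i + G n 0) :
    HasSum (fun n ↦ ∑ i ∈ range k, F n i + G n 0) (∑' i, F 0 i) := by
  simp_rw [← tsum_sub_tsum_succ_of_wz k hF hwz hG] at hs ⊢
  exact hasSum_sub_succ_of_tendsto_zero hs hrow

end Telescoping

namespace Zeta3Amdeberhan

noncomputable def F (n i : ℕ) : ℝ :=
  (-1) ^ n * ((n ! : ℝ) ^ 2 * (n + i)! / ((2 * n + 1 + i : ℝ) ^ 2 * (3 * n + 1 + i)!))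

noncomputable def G (n i : ℕ) : ℝ :=
  (-1) ^ n * ((n ! : ℝ) ^ 2 * (n + 1 + i)! / (2 * (n + 1 : ℝ) * (3 * n + 3 + i)!))

theorem F_zero (i : ℕ) : F 0 i = 1 / ((i : ℝ) + 1) ^ 3 := by
  simp only [F, pow_zero, factorial_zero, Nat.cast_zero, zero_add, mul_zero, one_mul,
    Nat.cast_one]
  rw [add_comm 1 i, factorial_succ]
  push_cast
  field_simp
  ring

theorem F_wz (n i : ℕ) : F n (i + 2) - F (n + 1) i = G n i - G n (i + 1) := by
  rw [F, F, G, G, show n + (i + 2) = n + 1 + i + 1 by ring,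
    show 3 * n + 1 + (i + 2) = 3 * n + 3 + i by ring,
    show 3 * (n + 1) + 1 + i = 3 * n + 3 + i + 1 by ring,
    show n + 1 + (i + 1) = n + 1 + i + 1 by ring,
    show 3 * n + 3 + (i + 1) = 3 * n + 3 + i + 1 by ring]
  simp only [factorial_succ, pow_succ]
  push_cast
  field_simp
  ring

theorem four_pow_mul_factorial_sq_le (n : ℕ) : 4 ^ n * n ! ^ 2 ≤ (2 * n + 1)! := by
  have h := choose_mul_factorial_mul_factorial (le_add_left n n)
  rw [add_tsub_cancel_right, ← two_mul] at h
  calc 4 ^ n * n ! ^ 2 ≤ (2 * n + 1) * (2 * n).choose n * n ! ^ 2 := by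
        gcongr; exact four_pow_le_two_mul_add_one_mul_central_binom n
    _ = (2 * n + 1)! := by rw [factorial_succ, ← h]; ring

theorem four_pow_mul_factorial_sq_mul_factorial_le (n i : ℕ) :
    4 ^ n * n ! ^ 2 * (n + i)! ≤ (3 * n + 1 + i)! :=
  calc 4 ^ n * n ! ^ 2 * (n + i)! ≤ (2 * n + 1)! * (n + i)! := by
        gcongr; exact four_pow_mul_factorial_sq_le n
    _ ≤ (2 * n + 1 + (n + i))! :=
        le_of_dvd (factorial_pos _) (factorial_mul_factorial_dvd_factorial_add _ _)
    _ = (3 * n + 1 + i)! := by ring_nf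

theorem abs_F_le (n i : ℕ) : |F n i| ≤ (1 / 4) ^ n / ((i : ℝ) + 1) ^ 2 := by
  have hfac : (4 : ℝ) ^ n * n ! ^ 2 * (n + i)! ≤ (3 * n + 1 + i)! := by
    exact_mod_cast four_pow_mul_factorial_sq_mul_factorial_le n i
  have hden : (i + 1 : ℝ) ^ 2 ≤ (2 * n + 1 + i) ^ 2 :=
    pow_le_pow_left₀ (by positivity) (by linarith [n.cast_nonneg (α := ℝ)]) 2
  rw [F, abs_mul, abs_neg_one_pow, one_mul, abs_of_nonneg (by positivity), div_pow, one_pow,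
    div_div, div_le_div_iff₀ (by positivity) (by positivity)]
  calc (n ! : ℝ) ^ 2 * ((n + i)! : ℝ) * (4 ^ n * (i + 1) ^ 2)
      = (4 ^ n * n ! ^ 2 * (n + i)!) * (i + 1) ^ 2 := by ring
    _ ≤ ((3 * n + 1 + i)! : ℝ) * (2 * n + 1 + i) ^ 2 := by gcongr
    _ = 1 * ((2 * n + 1 + i : ℝ) ^ 2 * (3 * n + 1 + i)!) := by ring

theorem abs_G_le (n i : ℕ) : |G n i| ≤ (n ! : ℝ) ^ 2 / (i + 1) := by
  have hfac : (i + 1 : ℝ) * (n + 1 + i)! ≤ (3 * n + 3 + i)! := by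
    rw [show 3 * n + 3 + i = 3 * n + 2 + i + 1 by ring, factorial_succ]
    exact_mod_cast Nat.mul_le_mul (by omega) (factorial_le (by omega))
  rw [G, abs_mul, abs_neg_one_pow, one_mul, abs_of_nonneg (by positivity),
    div_le_div_iff₀ (by positivity) (by positivity)]
  calc (n ! : ℝ) ^ 2 * ((n + 1 + i)! : ℝ) * (i + 1)
      = (n ! : ℝ) ^ 2 * ((i + 1 : ℝ) * (n + 1 + i)!) := by ring
    _ ≤ (n ! : ℝ) ^ 2 * (3 * n + 3 + i)! := by gcongr
    _ ≤ (n ! : ℝ) ^ 2 * (2 * (n + 1 : ℝ) * (3 * n + 3 + i)!) := by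
        gcongr; exact le_mul_of_one_le_left (by positivity) (by linarith [n.cast_nonneg (α := ℝ)])

theorem abs_G_zero_le (n : ℕ) : |G n 0| ≤ (1 / 4) ^ n := by
  have hfac : (4 : ℝ) ^ n * n ! ^ 2 * (n + 1)! ≤ (3 * n + 3)! := by
    exact_mod_cast (four_pow_mul_factorial_sq_mul_factorial_le n 1).trans (factorial_le (by omega))
  rw [G, abs_mul, abs_neg_one_pow, one_mul, abs_of_nonneg (by positivity), div_pow, one_pow,
    div_le_div_iff₀ (by positivity) (by positivity)]
  simp only [add_zero]
  calc (n ! : ℝ) ^ 2 * ((n + 1)! : ℝ) * 4 ^ n = (4 : ℝ) ^ n * n ! ^ 2 * (n + 1)! := by ring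
    _ ≤ ((3 * n + 3)! : ℝ) := hfac
    _ ≤ 1 * (2 * (n + 1 : ℝ) * (3 * n + 3)!) := by
        rw [one_mul]
        exact le_mul_of_one_le_left (by positivity) (by linarith [n.cast_nonneg (α := ℝ)])

theorem summable_one_div_add_one_sq : Summable fun i : ℕ ↦ 1 / ((i : ℝ) + 1) ^ 2 := by
  simpa using (summable_nat_add_iff 1).mpr (Real.summable_one_div_nat_pow.mpr one_lt_two)

theorem summable_F (n : ℕ) : Summable (F n) :=
  Summable.of_norm_bounded (summable_one_div_add_one_sq.mul_left ((1 / 4 : ℝ) ^ n))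
    fun i ↦ (abs_F_le n i).trans_eq (mul_one_div _ _).symm

theorem tendsto_tsum_F : Tendsto (fun n ↦ ∑' i, F n i) atTop (𝓝 0) := by
  refine squeeze_zero_norm (fun n ↦ tsum_of_norm_bounded
    (summable_one_div_add_one_sq.hasSum.mul_left ((1 / 4 : ℝ) ^ n))
    fun i ↦ (abs_F_le n i).trans_eq (mul_one_div _ _).symm) ?_
  simpa only [zero_mul] using (tendsto_pow_atTop_nhds_zero_of_lt_one (r := (1 / 4 : ℝ))
    (by norm_num) (by norm_num)).mul_const _

theorem tendsto_G (n : ℕ) : Tendsto (G n) atTop (𝓝 0) := by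
  refine squeeze_zero_norm (abs_G_le n) ?_
  simpa [div_eq_mul_inv] using
    (tendsto_one_div_add_atTop_nhds_zero_nat (𝕜 := ℝ)).const_mul ((n ! : ℝ) ^ 2)

theorem summable_sum_range_two_F_add_G : Summable fun n ↦ ∑ i ∈ range 2, F n i + G n 0 := by
  refine Summable.of_norm_bounded ((summable_geometric_of_lt_one (r := (1 / 4 : ℝ))
    (by norm_num) (by norm_num)).mul_left 3) fun n ↦ ?_
  have hF (i : ℕ) : |F n i| ≤ (1 / 4) ^ n :=
    (abs_F_le n i).trans
      (div_le_self (by positivity) (one_le_pow₀ (by linarith [i.cast_nonneg (α := ℝ)])))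
  rw [Real.norm_eq_abs, sum_range_succ, sum_range_one]
  calc |F n 0 + F n 1 + G n 0| ≤ |F n 0| + |F n 1| + |G n 0| := abs_add_three _ _ _
    _ ≤ 3 * (1 / 4) ^ n := by linarith [hF 0, hF 1, abs_G_zero_le n]

theorem choose_mul_choose_mul_factorial_pow (m : ℕ) :
    (2 * m).choose m * (3 * m).choose m * m ! ^ 3 = (3 * m)! := by
  have h2 := choose_mul_factorial_mul_factorial (show m ≤ 2 * m by omega)
  have h3 := choose_mul_factorial_mul_factorial (show m ≤ 3 * m by omega)
  rw [show 2 * m - m = m by omega] at h2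
  rw [show 3 * m - m = 2 * m by omega, ← h2] at h3
  rw [← h3]; ring

theorem sum_range_two_F_add_G (n : ℕ) :
    ∑ i ∈ range 2, F n i + G n 0 = 1 / 4 * ((-1 : ℝ) ^ n *
        (56 * ((n : ℝ) + 1) ^ 2 - 32 * ((n : ℝ) + 1) + 5) /
        (((n : ℝ) + 1) ^ 3 * (2 * ((n : ℝ) + 1) - 1) ^ 2 *
          ((2 * (n + 1)).choose (n + 1) : ℝ) * ((3 * (n + 1)).choose (n + 1) : ℝ))) := by
  have hC2 : ((2 * (n + 1)).choose (n + 1) : ℝ) ≠ 0 := by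
    exact_mod_cast (choose_pos (by omega)).ne'
  have hC : ((3 * (n + 1)).choose (n + 1) : ℝ) =
      (3 * (n + 1))! / ((2 * (n + 1)).choose (n + 1) * (n + 1)! ^ 3) := by
    rw [eq_div_iff (by positivity), ← choose_mul_choose_mul_factorial_pow]
    push_cast; ring
  rw [hC, show 2 * ((n : ℝ) + 1) - 1 = 2 * n + 1 by ring, sum_range_succ, sum_range_one, F, F, G,
    show 3 * (n + 1) = 3 * n + 1 + 1 + 1 by ring, show n + 1 + 0 = n + 1 by ring,
    show 3 * n + 3 + 0 = 3 * n + 1 + 1 + 1 by ring]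
  simp only [factorial_succ, add_zero]
  push_cast
  field_simp
  ring

end Zeta3Amdeberhan

open Zeta3Amdeberhan

theorem zeta3_amdeberhan_series :
    (∑' k : ℕ, (1 : ℝ) / ((k : ℝ) + 1) ^ 3) =
      (1 / 4) * ∑' n : ℕ, (-1 : ℝ) ^ n *
        (56 * ((n : ℝ) + 1) ^ 2 - 32 * ((n : ℝ) + 1) + 5) /
        (((n : ℝ) + 1) ^ 3 * (2 * ((n : ℝ) + 1) - 1) ^ 2 *
          ((2 * (n + 1)).choose (n + 1) : ℝ) * ((3 * (n + 1)).choose (n + 1) : ℝ)) := by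
  have hdrops := hasSum_tsum_row_zero_of_wz 2 summable_F F_wz tendsto_G tendsto_tsum_F
    summable_sum_range_two_F_add_G
  calc (∑' k : ℕ, (1 : ℝ) / ((k : ℝ) + 1) ^ 3)
      = ∑' i, F 0 i := tsum_congr fun i ↦ (F_zero i).symm
    _ = ∑' n, (∑ i ∈ range 2, F n i + G n 0) := hdrops.tsum_eq.symm
    _ = _ := by rw [← tsum_mul_left]; exact tsum_congr sum_range_two_F_add_G
end

section
/- Define q_n^{(ρ)} = ∑_{k=0}^n C(n+k,k)² C(n,k)² (k+ρn+1)/(n+k) for integers n ≥ 1 and ρ ≥ 1. Then q_n^{(ρ)} satisfies (n+2)⁴ Φ_n^{(ρ)} q_{n+2}^{(ρ)} + β_n^{(ρ)} q_{n+1}^{(ρ)} + n⁴ Φ_{n+1}^{(ρ)} q_n^{(ρ)} = 0 for all n ≥ 1, where Φ_n^{(ρ)} = 24n⁵ρ² − 12n⁵ + 54n⁴ρ² + 39n⁴ρ − 33n⁴ + 46n³ρ² + 70n³ρ + 19n²ρ² + 56n²ρ + 33n² + 3nρ² + 21nρ + 24n + 3ρ + 5 and β_n^{(ρ)} = −2(n+1)(408n⁸ρ²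 − 204n⁸ + 3162n⁷ρ² + 663n⁷ρ − 1683n⁷ + 10028n⁶ρ² + 4433n⁶ρ − 4899n⁶ + 16802n⁵ρ² + 12409n⁵ρ − 5487n⁵ + 16070n⁴ρ² + 18955n⁴ρ + 735n⁴ + 8888n³ρ² + 17212n³ρ + 7366n³ + 2708n²ρ² + 9340n²ρ + 6870n² + 344nρ² + 2776nρ + 2748n + 344ρ + 412). -/
/-- The denominators q_n^{(ρ)}. -/
noncomputable def qSeq (ρ n : ℕ) : ℚ :=
  ∑ k ∈ Finset.range (n + 1),
    ((n + k).choose k : ℚ) ^ 2 * (n.choose k : ℚ) ^ 2 *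
      ((k : ℚ) + ρ * n + 1) / ((n : ℚ) + k)

/-- The polynomial Φ_n^{(ρ)}. -/
def Phi (n ρ : ℚ) : ℚ :=
  24*n^5*ρ^2 - 12*n^5 + 54*n^4*ρ^2 + 39*n^4*ρ - 33*n^4 + 46*n^3*ρ^2 + 70*n^3*ρ
    + 19*n^2*ρ^2 + 56*n^2*ρ + 33*n^2 + 3*n*ρ^2 + 21*n*ρ + 24*n + 3*ρ + 5

/-- The polynomial β_n^{(ρ)}. -/
def betaP (n ρ : ℚ) : ℚ :=
  -2*(n+1)*(408*n^8*ρ^2 - 204*n^8 + 3162*n^7*ρ^2 + 663*n^7*ρ - 1683*n^7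
    + 10028*n^6*ρ^2 + 4433*n^6*ρ - 4899*n^6 + 16802*n^5*ρ^2 + 12409*n^5*ρ
    - 5487*n^5 + 16070*n^4*ρ^2 + 18955*n^4*ρ + 735*n^4 + 8888*n^3*ρ^2
    + 17212*n^3*ρ + 7366*n^3 + 2708*n^2*ρ^2 + 9340*n^2*ρ + 6870*n^2
    + 344*n*ρ^2 + 2776*n*ρ + 2748*n + 344*ρ + 412)

set_option maxHeartbeats 1000000 in
def Qpoly (n r k : ℚ) : ℚ :=
  (-272 - 2824*n - 12804*n^2 - 33406*n^3 - 55586*n^4 - 59862*n^5 - 40974*n^6 - 17076*n^7 - 3936*n^8 - 384*n^9)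
  + (-3024 - 35656*n - 186212*n^2 - 564894*n^3 - 1088414*n^4 - 1336778*n^5 - 914294*n^6 - 22992*n^7 + 661036*n^8 + 752444*n^9 + 466152*n^10 + 181680*n^11 + 44424*n^12 + 6240*n^13 + 384*n^14)*r
  + (-2336 - 31056*n - 187608*n^2 - 683140*n^3 - 1676568*n^4 - 2935854*n^5 - 3776202*n^6 - 3609512*n^7 - 2561020*n^8 - 1330738*n^9 - 491758*n^10 - 122276*n^11 - 18320*n^12 - 1248*n^13)*r^2
  + (-2336*n - 30368*n^2 - 179568*n^3 - 641184*n^4 - 1547234*n^5 - 2661542*n^6 - 3347040*n^7 - 3105752*n^8 - 2121770*n^9 - 1052806*n^10 - 368640*n^11 - 86264*n^12 - 12096*n^13 - 768*n^14)*r^3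
  + (-2280 - 24848*n - 118282*n^2 - 320602*n^3 - 531442*n^4 - 515066*n^5 - 173808*n^6 + 248300*n^7 + 422846*n^8 + 318204*n^9 + 142026*n^10 + 38484*n^11 + 5856*n^12 + 384*n^13)*k
  + (-3208 - 36960*n - 190930*n^2 - 586406*n^3 - 1193998*n^4 - 1708558*n^5 - 1777384*n^6 - 1362590*n^7 - 764516*n^8 - 305054*n^9 - 81756*n^10 - 13160*n^11 - 960*n^12)*k*r
  + (-1104 - 14912*n - 91852*n^2 - 342652*n^3 - 866362*n^4 - 1564214*n^5 - 2075388*n^6 - 2048342*n^7 - 1499216*n^8 - 799848*n^9 - 301070*n^10 - 75548*n^11 - 11328*n^12 - 768*n^13)*k*r^2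
  + (-1104*n - 12808*n^2 - 66772*n^3 - 207734*n^4 - 419490*n^5 - 571560*n^6 - 536424*n^7 - 348458*n^8 - 154358*n^9 - 44596*n^10 - 7584*n^11 - 576*n^12)*k*r^3
  + (-1296 - 12712*n - 52964*n^2 - 120494*n^3 - 154114*n^4 - 86856*n^5 + 33840*n^6 + 92334*n^7 + 67482*n^8 + 25224*n^9 + 4872*n^10 + 384*n^11)*k^2
  + (208 + 920*n - 3852*n^2 - 40982*n^3 - 146714*n^4 - 294208*n^5 - 370270*n^6 - 307502*n^7 - 172924*n^8 - 66276*n^9 - 16920*n^10 - 2640*n^11 - 192*n^12)*k^2*r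
  + (1056 + 11120*n + 50904*n^2 + 132428*n^3 + 213160*n^4 + 212342*n^5 + 121532*n^6 + 28026*n^7 - 8284*n^8 - 7176*n^9 - 1736*n^10 - 144*n^11)*k^2*r^2
  + (1056*n + 11968*n^2 + 60448*n^3 + 180296*n^4 + 347166*n^5 + 450570*n^6 + 403710*n^7 + 251642*n^8 + 107768*n^9 + 30376*n^10 + 5088*n^11 + 384*n^12)*k^2*r^3
  + (712 + 6864*n + 27914*n^2 + 61298*n^3 + 73892*n^4 + 35136*n^5 - 25492*n^6 - 50886*n^7 - 35166*n^8 - 12828*n^9 - 2448*n^10 - 192*n^11)*k^3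
  + (392 + 4672*n + 24682*n^2 + 76222*n^3 + 152076*n^4 + 202816*n^5 + 181014*n^6 + 105966*n^7 + 38840*n^8 + 8056*n^9 + 720*n^10)*k^3*r
  + (-176 - 1280*n - 2276*n^2 + 7564*n^3 + 46782*n^4 + 111242*n^5 + 153284*n^6 + 132646*n^7 + 72950*n^8 + 24724*n^9 + 4704*n^10 + 384*n^11)*k^3*r^2
  + (-176*n - 1848*n^2 - 8476*n^3 - 22370*n^4 - 36394*n^5 - 37310*n^6 - 24062*n^7 - 9452*n^8 - 2064*n^9 - 192*n^10)*k^3*r^3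


/-- Summand of `qSeq`. -/
noncomputable def T (ρ m k : ℕ) : ℚ :=
  ((m + k).choose k : ℚ) ^ 2 * (m.choose k : ℚ) ^ 2 *
      ((k : ℚ) + ρ * m + 1) / ((m : ℚ) + k)

/-- The WZ certificate auxiliary function. -/
noncomputable def Gg (n ρ k : ℕ) : ℚ :=
  ((n + k + 2).choose k : ℚ) ^ 2 * ((n + 2).choose k : ℚ) ^ 2 * (k : ℚ) ^ 4
      * Qpoly (n : ℚ) (ρ : ℚ) (k : ℚ)
    / (((n:ℚ)+1)^2 * ((n:ℚ)+2)^2 * ((n:ℚ)+(k:ℚ)) * ((n:ℚ)+(k:ℚ)+1)^2 * ((n:ℚ)+(k:ℚ)+2)^2)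

lemma hTop (m k : ℕ) : (m + 1) * m.choose k = (m + 1).choose k * (m + 1 - k) := by
  rw [Nat.add_one_mul_choose_eq, Nat.choose_succ_right_eq]

set_option maxHeartbeats 12000000 in
lemma key (n ρ k : ℕ) (hn : 1 ≤ n) (hk : k ≤ n + 2) :
    ((n : ℚ) + 2) ^ 4 * Phi (n : ℚ) (ρ : ℚ) * T ρ (n + 2) k
      + betaP (n : ℚ) (ρ : ℚ) * T ρ (n + 1) k
      + (n : ℚ) ^ 4 * Phi ((n : ℚ) + 1) (ρ : ℚ) * T ρ n k
      = Gg n ρ (k + 1) - Gg n ρ k := by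
  have hn1 : (1:ℚ) ≤ (n:ℚ) := by exact_mod_cast hn
  have hkq : (0:ℚ) ≤ (k:ℚ) := by positivity
  have d0 : (n:ℚ) + (k:ℚ) ≠ 0 := by nlinarith
  have d1 : (n:ℚ) + (k:ℚ) + 1 ≠ 0 := by nlinarith
  have d2 : (n:ℚ) + (k:ℚ) + 2 ≠ 0 := by nlinarith
  have d3 : (n:ℚ) + (k:ℚ) + 3 ≠ 0 := by nlinarith
  have dk : (k:ℚ) + 1 ≠ 0 := by nlinarith
  have e1 : (n:ℚ) + 1 ≠ 0 := by nlinarith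
  have e2 : (n:ℚ) + 2 ≠ 0 := by nlinarith
  have hD : ((n:ℚ)+1)^2 * ((n:ℚ)+2)^2 * ((n:ℚ)+(k:ℚ)) * ((n:ℚ)+(k:ℚ)+1)^2 * ((n:ℚ)+(k:ℚ)+2)^2 ≠ 0 := by
    exact mul_ne_zero (mul_ne_zero (mul_ne_zero (mul_ne_zero
      (pow_ne_zero 2 e1) (pow_ne_zero 2 e2)) d0) (pow_ne_zero 2 d1)) (pow_ne_zero 2 d2)
  -- bridging identities for binomial coefficients
  have h2k : ((n + 2 + k).choose k : ℚ) = ((n + k + 2).choose k : ℚ) := by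
    rw [show n + 2 + k = n + k + 2 from by omega]
  have h1k : ((n + 1 + k).choose k : ℚ)
      = ((n:ℚ) + 2) * ((n + k + 2).choose k : ℚ) / ((n:ℚ) + (k:ℚ) + 2) := by
    rw [eq_div_iff d2]
    have t := hTop (n + k + 1) k
    rw [show n + k + 1 + 1 = n + k + 2 from rfl, show n + k + 2 - k = n + 2 from by omega] at t
    have t := congrArg (fun z : ℕ => (z : ℚ)) t
    push_cast at t
    rw [show n + 1 + k = n + k + 1 from by omega]
    linarith [t]
  have h0k : ((n + k).choose k : ℚ)
      = ((n:ℚ) + 1) * ((n:ℚ) + 2) * ((n + k + 2).choose k : ℚ)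
          / (((n:ℚ) + (k:ℚ) + 1) * ((n:ℚ) + (k:ℚ) + 2)) := by
    rw [eq_div_iff (mul_ne_zero d1 d2)]
    have t1 := hTop (n + k) k
    rw [show n + k + 1 - k = n + 1 from by omega] at t1
    have t2 := hTop (n + k + 1) k
    rw [show n + k + 1 + 1 = n + k + 2 from rfl, show n + k + 2 - k = n + 2 from by omega] at t2
    have t1 := congrArg (fun z : ℕ => (z : ℚ)) t1
    have t2 := congrArg (fun z : ℕ => (z : ℚ)) t2
    push_cast at t1 t2
    nlinarith [t1, t2]
  have hn1k : ((n + 1).choose k : ℚ)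
      = ((n + 2).choose k : ℚ) * ((n:ℚ) + 2 - (k:ℚ)) / ((n:ℚ) + 2) := by
    rw [eq_div_iff e2]
    have t := hTop (n + 1) k
    rw [show n + 1 + 1 = n + 2 from rfl] at t
    have t := congrArg (fun z : ℕ => (z : ℚ)) t
    push_cast [Nat.cast_sub hk] at t
    linarith [t]
  have hn0k : ((n).choose k : ℚ)
      = ((n + 2).choose k : ℚ) * (((n:ℚ) + 1 - (k:ℚ)) * ((n:ℚ) + 2 - (k:ℚ)))
          / (((n:ℚ) + 1) * ((n:ℚ) + 2)) := by
    rw [eq_div_iff (mul_ne_zero e1 e2)]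
    rcases Nat.lt_or_ge (n + 1) k with hlt | hle
    · have hk2 : k = n + 2 := by omega
      subst hk2
      rw [Nat.choose_eq_zero_of_lt (by omega : n < n + 2)]
      push_cast
      ring
    · have t1 := hTop n k
      have t2 := hTop (n + 1) k
      rw [show n + 1 + 1 = n + 2 from rfl] at t2
      have t1 := congrArg (fun z : ℕ => (z : ℚ)) t1
      have t2 := congrArg (fun z : ℕ => (z : ℚ)) t2
      push_cast [Nat.cast_sub (by omega : k ≤ n + 1), Nat.cast_sub hk] at t1 t2
      nlinarith [t1, t2]
  have hBk1 : ((n + 2).choose (k + 1) : ℚ)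
      = ((n + 2).choose k : ℚ) * ((n:ℚ) + 2 - (k:ℚ)) / ((k:ℚ) + 1) := by
    rw [eq_div_iff dk]
    have t := Nat.choose_succ_right_eq (n + 2) k
    have t := congrArg (fun z : ℕ => (z : ℚ)) t
    push_cast [Nat.cast_sub hk] at t
    linarith [t]
  have hAk1 : ((n + k + 3).choose (k + 1) : ℚ)
      = ((n:ℚ) + (k:ℚ) + 3) * ((n + k + 2).choose k : ℚ) / ((k:ℚ) + 1) := by
    rw [eq_div_iff dk]
    have t := Nat.add_one_mul_choose_eq (n + k + 2) k
    have t := congrArg (fun z : ℕ => (z : ℚ)) t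
    push_cast at t
    linarith [t]
  -- each of the five pieces over the common denominator D
  have L2 : ((n:ℚ) + 2) ^ 4 * Phi (n:ℚ) (ρ:ℚ) * T ρ (n + 2) k
      = ((n:ℚ)+2)^4 * Phi (n:ℚ) (ρ:ℚ) * ((n + k + 2).choose k : ℚ)^2 * ((n + 2).choose k : ℚ)^2
          * ((k:ℚ) + (ρ:ℚ)*((n:ℚ)+2) + 1)
          * (((n:ℚ)+1)^2 * ((n:ℚ)+2)^2 * ((n:ℚ)+(k:ℚ)) * ((n:ℚ)+(k:ℚ)+1)^2 * ((n:ℚ)+(k:ℚ)+2))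
        / (((n:ℚ)+1)^2 * ((n:ℚ)+2)^2 * ((n:ℚ)+(k:ℚ)) * ((n:ℚ)+(k:ℚ)+1)^2 * ((n:ℚ)+(k:ℚ)+2)^2) := by
    rw [T, h2k]
    push_cast
    field_simp
    ring
  have L1 : betaP (n:ℚ) (ρ:ℚ) * T ρ (n + 1) k
      = betaP (n:ℚ) (ρ:ℚ) * ((n + k + 2).choose k : ℚ)^2 * ((n + 2).choose k : ℚ)^2
          * ((n:ℚ)+2-(k:ℚ))^2 * ((k:ℚ) + (ρ:ℚ)*((n:ℚ)+1) + 1)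
          * (((n:ℚ)+1)^2 * ((n:ℚ)+2)^2 * ((n:ℚ)+(k:ℚ)) * ((n:ℚ)+(k:ℚ)+1))
        / (((n:ℚ)+1)^2 * ((n:ℚ)+2)^2 * ((n:ℚ)+(k:ℚ)) * ((n:ℚ)+(k:ℚ)+1)^2 * ((n:ℚ)+(k:ℚ)+2)^2) := by
    rw [T, h1k, hn1k]
    push_cast
    field_simp
    ring
  have L0 : (n:ℚ) ^ 4 * Phi ((n:ℚ)+1) (ρ:ℚ) * T ρ n k
      = (n:ℚ)^4 * Phi ((n:ℚ)+1) (ρ:ℚ) * ((n + k + 2).choose k : ℚ)^2 * ((n + 2).choose k : ℚ)^2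
          * ((n:ℚ)+1-(k:ℚ))^2 * ((n:ℚ)+2-(k:ℚ))^2 * ((k:ℚ) + (ρ:ℚ)*(n:ℚ) + 1)
          * (((n:ℚ)+1)^2 * ((n:ℚ)+2)^2)
        / (((n:ℚ)+1)^2 * ((n:ℚ)+2)^2 * ((n:ℚ)+(k:ℚ)) * ((n:ℚ)+(k:ℚ)+1)^2 * ((n:ℚ)+(k:ℚ)+2)^2) := by
    rw [T, h0k, hn0k]
    push_cast
    field_simp
  have G1 : Gg n ρ (k + 1)
      = ((n + k + 2).choose k : ℚ)^2 * ((n + 2).choose k : ℚ)^2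
          * ((n:ℚ)+2-(k:ℚ))^2 * Qpoly (n:ℚ) (ρ:ℚ) ((k:ℚ)+1)
          * (((n:ℚ)+(k:ℚ)) * ((n:ℚ)+(k:ℚ)+1))
        / (((n:ℚ)+1)^2 * ((n:ℚ)+2)^2 * ((n:ℚ)+(k:ℚ)) * ((n:ℚ)+(k:ℚ)+1)^2 * ((n:ℚ)+(k:ℚ)+2)^2) := by
    rw [Gg, show n + (k + 1) + 2 = n + k + 3 from by omega, hAk1, hBk1]
    push_cast
    field_simp
    ring
  have G0 : Gg n ρ k
      = ((n + k + 2).choose k : ℚ)^2 * ((n + 2).choose k : ℚ)^2 * (k:ℚ)^4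
          * Qpoly (n:ℚ) (ρ:ℚ) (k:ℚ)
        / (((n:ℚ)+1)^2 * ((n:ℚ)+2)^2 * ((n:ℚ)+(k:ℚ)) * ((n:ℚ)+(k:ℚ)+1)^2 * ((n:ℚ)+(k:ℚ)+2)^2) := by
    rw [Gg]
  rw [L2, L1, L0, G1, G0, ← add_div, ← add_div, ← sub_div]
  congr 1
  simp only [Phi, betaP, Qpoly]
  ring

theorem qSeq_recurrence (n ρ : ℕ) (hn : 1 ≤ n) (hρ : 1 ≤ ρ) :
    ((n : ℚ) + 2) ^ 4 * Phi (n : ℚ) (ρ : ℚ) * qSeq ρ (n + 2)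
      + betaP (n : ℚ) (ρ : ℚ) * qSeq ρ (n + 1)
      + (n : ℚ) ^ 4 * Phi ((n : ℚ) + 1) (ρ : ℚ) * qSeq ρ n = 0 := by
  have hq : ∀ m, qSeq ρ m = ∑ k ∈ Finset.range (m + 1), T ρ m k := fun m => rfl
  have hT1 : T ρ (n + 1) (n + 2) = 0 := by
    rw [T, Nat.choose_eq_zero_of_lt (by omega : n + 1 < n + 2)]
    push_cast; ring
  have hT0a : T ρ n (n + 1) = 0 := by
    rw [T, Nat.choose_eq_zero_of_lt (by omega : n < n + 1)]
    push_cast; ring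
  have hT0b : T ρ n (n + 2) = 0 := by
    rw [T, Nat.choose_eq_zero_of_lt (by omega : n < n + 2)]
    push_cast; ring
  have h2 : qSeq ρ (n + 2) = ∑ k ∈ Finset.range (n + 3), T ρ (n + 2) k := hq (n + 2)
  have h1 : ∑ k ∈ Finset.range (n + 3), T ρ (n + 1) k = qSeq ρ (n + 1) := by
    rw [hq (n + 1), show n + 3 = (n + 2) + 1 from rfl, Finset.sum_range_succ, hT1, add_zero]
  have h0 : ∑ k ∈ Finset.range (n + 3), T ρ n k = qSeq ρ n := by
    rw [hq n, show n + 3 = (n + 2) + 1 from rfl, Finset.sum_range_succ, hT0b, add_zero,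
      show n + 2 = (n + 1) + 1 from rfl, Finset.sum_range_succ, hT0a, add_zero]
  rw [h2, ← h1, ← h0, Finset.mul_sum, Finset.mul_sum, Finset.mul_sum,
    ← Finset.sum_add_distrib, ← Finset.sum_add_distrib]
  have hcong : ∀ j ∈ Finset.range (n + 3),
      ((n : ℚ) + 2) ^ 4 * Phi (n : ℚ) (ρ : ℚ) * T ρ (n + 2) j
        + betaP (n : ℚ) (ρ : ℚ) * T ρ (n + 1) j
        + (n : ℚ) ^ 4 * Phi ((n : ℚ) + 1) (ρ : ℚ) * T ρ n j
      = Gg n ρ (j + 1) - Gg n ρ j := by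
    intro j hjmem
    exact key n ρ j hn (by have := Finset.mem_range.mp hjmem; omega)
  rw [Finset.sum_congr rfl hcong, Finset.sum_range_sub (fun j => Gg n ρ j)]
  have hend : Gg n ρ (n + 3) = 0 := by
    rw [Gg, Nat.choose_eq_zero_of_lt (by omega : n + 2 < n + 3)]
    push_cast; ring
  have hzero : Gg n ρ 0 = 0 := by
    rw [Gg]; push_cast; ring
  rw [hend, hzero, sub_zero]
end
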